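/- Let O ⊆ P contain A. The linear map ξ : ℝ^P → ℝ^P defined by ξ(ε_{i,i}) = ε_{i,r(i,i)} and, for j ≠ i, ξ(ε_{i,j}) = ε_{i,r(i,j)} − ε_{i,r(i,j')} where j' is the ⋖-maximal element with j' ⋖ j and (i,j') ∈ O, is unimodular (its matrix has determinant ±1 and integer entries, with integer-entry inverse). -/

import Mathlib

open scoped Classical Pointwise

noncomputable section

/-- Position of `j` in the total order `1 ⋖ … ⋖ n ⋖ -n ⋖ … ⋖ -1` on `N`. -/
def ordKey (n : ℕ) (j : ℤ) : ℤ := if 0 < j then j else 2 * n + 1 + j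

/-- Membership in the type C Gelfand–Tsetlin poset `P`:
pairs `(i,j)` with `1 ≤ i ≤ n` and `i ≤ |j| ≤ n`. -/
def inP (n : ℕ) (p : ℤ × ℤ) : Prop :=
  1 ≤ p.1 ∧ p.1 ≤ (n : ℤ) ∧ p.1 ≤ |p.2| ∧ |p.2| ≤ (n : ℤ)

/-- The order relation `⪯` of `P`: `(i₁,j₁) ⪯ (i₂,j₂)` iff `i₁ ≤ i₂` and `j₁ ⩽̇ j₂`. -/
def ple (n : ℕ) (p q : ℤ × ℤ) : Prop :=
  p.1 ≤ q.1 ∧ ordKey n p.2 ≤ ordKey n q.2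

/-- Strict version of `⪯`. -/
def plt (n : ℕ) (p q : ℤ × ℤ) : Prop := ple n p q ∧ p ≠ q

/-- The elements of `N = {1,…,n,-n,…,-1}` listed in increasing `⋖` order. -/
def jList (n : ℕ) : List ℤ :=
  ((List.range n).map fun t => (t : ℤ) + 1) ++ ((List.range n).map fun t => (t : ℤ) - n)

/-- All pairs `(i,j)` with `i ∈ [1,n]`, `j ∈ N`, ordered first by `i` increasing,
then by `j` increasing with respect to `⋖`. -/
def posList (n : ℕ) : List (ℤ × ℤ) :=
  (List.range n).flatMap fun a => (jList n).map fun j => ((a : ℤ) + 1, j)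

/-- `P` as a finite set. -/
def Pfin (n : ℕ) : Finset (ℤ × ℤ) := (posList n).toFinset.filter (inP n)

/-- `N` as a finite set. -/
def Nfin (n : ℕ) : Finset ℤ := (jList n).toFinset

/-- The diagonal `A = {(i,i) : 1 ≤ i ≤ n}`. -/
def Aset (n : ℕ) : Finset (ℤ × ℤ) :=
  (Finset.range n).image fun t => (((t : ℤ) + 1, (t : ℤ) + 1) : ℤ × ℤ)

/-- Order ideals (downward closed subsets) of `P`. -/
def IsIdeal (n : ℕ) (J : Finset (ℤ × ℤ)) : Prop :=
  (∀ p ∈ J, inP n p) ∧ ∀ p ∈ J, ∀ q ∈ Pfin n, ple n q p → q ∈ J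

/-- The set of `≺`-maximal elements of `J`. -/
def maxPrec (n : ℕ) (J : Finset (ℤ × ℤ)) : Finset (ℤ × ℤ) :=
  J.filter fun p => ∀ q ∈ J, ple n p q → q = p

/-- `M_O(J) = (J ∩ O) ∪ max_≺(J)`. -/
def MO (n : ℕ) (O J : Finset (ℤ × ℤ)) : Finset (ℤ × ℤ) := (J ∩ O) ∪ maxPrec n J

/-- The permutation `w_M`: the product of the transpositions `s_{i,j}` over `(i,j) ∈ M`,
ordered first by `i` increasing and then by `j` increasing with respect to `⋖`
(the leftmost factor acts last). -/
def wPerm (n : ℕ) (M : Finset (ℤ × ℤ)) : Equiv.Perm ℤ :=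
  (((posList n).filter fun p => decide (p ∈ M)).map fun p => Equiv.swap p.1 p.2).prod

/-- `w^{O,J} = w_O⁻¹ ⬝ w_{M_O(J)}`. -/
def wOJ (n : ℕ) (O J : Finset (ℤ × ℤ)) : Equiv.Perm ℤ :=
  (wPerm n O)⁻¹ * wPerm n (MO n O J)

/-- The principal order ideal `⟨i,j⟩` of `(i,j) ∈ P`. -/
def princ (n : ℕ) (p : ℤ × ℤ) : Finset (ℤ × ℤ) := (Pfin n).filter fun q => ple n q p

/-- `r(i,j) = w^{O,⟨i,j⟩}(i)`. -/
def rMap (n : ℕ) (O : Finset (ℤ × ℤ)) (i j : ℤ) : ℤ := wOJ n O (princ n (i, j)) i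

/-- Inverse of `ordKey` (on the relevant range `[1, 2n]`). -/
def invOrdKey (n : ℕ) (t : ℤ) : ℤ := if t ≤ (n : ℤ) then t else t - (2 * n + 1)

/-- The `⋖`-maximal `j'` with `j' ⋖ j` and `(i,j') ∈ O`. -/
def prevO (n : ℕ) (O : Finset (ℤ × ℤ)) (i j : ℤ) : ℤ :=
  invOrdKey n (((((Nfin n).filter fun j' => (i, j') ∈ O ∧ ordKey n j' < ordKey n j).image
    (ordKey n)).max).unbotD 0)

/-- The pipe-dream linear transform `ξ` of `ℝ^P` (coordinates outside `P` are untouched):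
`ξ(ε_{i,i}) = ε_{i,r(i,i)}` and `ξ(ε_{i,j}) = ε_{i,r(i,j)} - ε_{i,r(i,j')}` for `j ≠ i`,
where `j'` is `⋖`-maximal with `j' ⋖ j` and `(i,j') ∈ O`. -/
def xiMap (n : ℕ) (O : Finset (ℤ × ℤ)) (x : (ℤ × ℤ) → ℝ) : (ℤ × ℤ) → ℝ := fun q =>
  if inP n q then
    (∑ j ∈ (Nfin n).filter (fun j => inP n (q.1, j) ∧ rMap n O q.1 j = q.2), x (q.1, j))
    - (∑ j ∈ (Nfin n).filter
        (fun j => inP n (q.1, j) ∧ j ≠ q.1 ∧ rMap n O q.1 (prevO n O q.1 j) = q.2), x (q.1, j))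
  else x q

/-- Indicator vector `1_{M_O(J)} ∈ ℝ^P`. -/
def indicMO (n : ℕ) (O J : Finset (ℤ × ℤ)) : (ℤ × ℤ) → ℝ := fun p =>
  if p ∈ MO n O J then 1 else 0

/-- The fundamental marked chain-order polytope `𝒬_O(ω_k)`:
the convex hull of the vectors `1_{M_O(J)}`, `J ∈ 𝒥ₖ`. -/
def QOfund (n : ℕ) (O : Finset (ℤ × ℤ)) (k : ℕ) : Set ((ℤ × ℤ) → ℝ) :=
  convexHull ℝ {x | ∃ J : Finset (ℤ × ℤ),
    IsIdeal n J ∧ (J ∩ Aset n).card = k ∧ x = indicMO n O J}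

/-- The marked chain-order polytope `𝒬_O(λ)` for `λ = a₁ω₁ + … + a_nω_n`:
the Minkowski sum `a₁𝒬_O(ω₁) + … + a_n𝒬_O(ω_n)`. -/
def QO (n : ℕ) (O : Finset (ℤ × ℤ)) (a : ℕ → ℕ) : Set ((ℤ × ℤ) → ℝ) :=
  ∑ k ∈ Finset.Icc 1 n, a k • QOfund n O k

/-- Integrality (lattice point) predicate. -/
def IsLat (x : (ℤ × ℤ) → ℝ) : Prop := ∀ p, ∃ m : ℤ, x p = m

/-- Type B: `λ(i) = a_i + … + a_{n-1} + a_n/2`. -/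
def lamB (n : ℕ) (a : ℕ → ℕ) (i : ℤ) : ℝ :=
  (∑ t ∈ Finset.Icc i.toNat (n - 1), (a t : ℝ)) + (a n : ℝ) / 2

/-- The type B poset polytope `𝒬^B_O(λ)` (H-description with factor `1/2`
on the coordinates in `B = {(i,-i)}`). -/
def QB (n : ℕ) (O : Finset (ℤ × ℤ)) (lam : ℤ → ℝ) : Set ((ℤ × ℤ) → ℝ) :=
  {x | (∀ i : ℤ, 1 ≤ i → i ≤ (n : ℤ) → x (i, i) = lam i) ∧
    (∀ p, inP n p → 0 ≤ x p) ∧ (∀ p, ¬ inP n p → x p = 0) ∧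
    ∀ (pq rs : ℤ × ℤ) (c : List (ℤ × ℤ)), pq ∈ O → inP n rs →
      (∀ q ∈ c, inP n q ∧ q ∉ O) →
      List.Chain' (plt n) (pq :: (c ++ [rs])) →
      (c.map x).sum ≤ x pq - (if rs.2 = -rs.1 then (1 : ℝ) / 2 else 1) * x rs}

/-- The point `x^{J,D}`. -/
def xJD (n : ℕ) (O J : Finset (ℤ × ℤ)) (D : Finset ℤ) : (ℤ × ℤ) → ℝ := fun p =>
  if p ∈ MO n O J then (if p.2 = -p.1 ∧ p.1 ∉ D then 2 else 1) else 0

/-- The projection `π : ℝ^P → ℝ^{P∖A}` (realized by zeroing the `A`-coordinates). -/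
def piA (x : (ℤ × ℤ) → ℝ) : (ℤ × ℤ) → ℝ := fun p => if p.2 = p.1 then 0 else x p

/-- The transformed type B poset polytope `Π^B_O(λ) = πξ(𝒬^B_O(λ))`. -/
def PiB (n : ℕ) (O : Finset (ℤ × ℤ)) (a : ℕ → ℕ) : Set ((ℤ × ℤ) → ℝ) :=
  (fun x => piA (xiMap n O x)) '' QB n O (lamB n a)

/-- The point `y^D ∈ ℝ^{P∖A}`. -/
def yD (D : Finset ℤ) : (ℤ × ℤ) → ℝ := fun p => if p.2 = -p.1 ∧ p.1 ∈ D then 1 else 0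


/-! For fixed `i`, `r(i, ·)` is the inverse of the permutation `wPermFrom n O i`, the product of
the swaps of `O` in rows `≥ i`: in `w_{M_O(⟨i,j⟩)}` the row-`i` swaps send `i` to `j`, the lower
rows, truncated at `j` in the `⋖` order, act on `j` exactly as the full lower rows of `w_O` do,
and these cancel against `w_O⁻¹`. So after permuting the coordinates of each row, `ξ` becomes
`x ↦ x - N x`, where `(N x)(i, j')` sums `x` over the `(i, j)` with `j' = prevO n O i j ⋖ j`.
Since `N` strictly raises the `⋖`-position, `x ↦ x - N x` is inverted by recursion along `⋖`,
and the recursion has integer coefficients. -/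

open Function

section ChildSum

variable {α R R' : Type*} [AddCommGroup R] [AddCommGroup R'] (children : α → Finset α)

def subChildSum (x : α → R) (m : α) : R := x m - ∑ p ∈ children m, x p

lemma subChildSum_map (f : R →+ R') (x : α → R) :
    subChildSum children (f ∘ x) = f ∘ subChildSum children x := by
  ext m
  simp [subChildSum, map_sum]

lemma subChildSum_smul_add {K : Type*} [Semiring K] [Module K R] (c : K) (x y : α → R) :
    subChildSum children (c • x + y) = c • subChildSum children x + subChildSum children y := by
  ext m
  simp only [subChildSum, Pi.add_apply, Pi.smul_apply, Finset.sum_add_distrib, ← Finset.smul_sum,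
    smul_sub]
  abel

def addChildSum (height : α → ℕ) (hheight : ∀ m, ∀ p ∈ children m, height p < height m)
    (y : α → R) (m : α) : R :=
  y m + ∑ p ∈ (children m).attach, addChildSum height hheight y p
termination_by height m
decreasing_by exact hheight m p.1 p.2

variable {children} (height : α → ℕ) (hheight : ∀ m, ∀ p ∈ children m, height p < height m)
include hheight

lemma subChildSum_injective : Injective (subChildSum children : (α → R) → α → R) := by
  intro x y hxy
  funext m
  induction hm : height m using Nat.strong_induction_on generalizing m with
  | _ k ih =>
    have hsum : ∑ p ∈ children m, x p = ∑ p ∈ children m, y p :=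
      Finset.sum_congr rfl fun p hp => ih (height p) (hm ▸ hheight m p hp) p rfl
    have := congrFun hxy m
    simp only [subChildSum, hsum] at this
    exact sub_left_injective this

lemma subChildSum_addChildSum (y : α → R) :
    subChildSum children (addChildSum children height hheight y) = y := by
  ext m
  rw [subChildSum, addChildSum, Finset.sum_attach _ (addChildSum children height hheight y)]
  abel

lemma subChildSum_bijective : Bijective (subChildSum children : (α → R) → α → R) :=
  ⟨subChildSum_injective height hheight, fun y => ⟨_, subChildSum_addChildSum height hheight y⟩⟩

end ChildSum

section Swaps

variable {α : Type*}

lemma apply_mem_of_mem_fixingSubgroup_compl {T : Set α} {σ : Equiv.Perm α}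
    (hσ : σ ∈ fixingSubgroup (Equiv.Perm α) Tᶜ) {x : α} (hx : x ∈ T) : σ x ∈ T := by
  by_contra hσx
  have : σ (σ x) = σ x := (mem_fixingSubgroup_iff _).1 hσ _ hσx
  exact hσx (by rwa [σ.injective this])

variable [DecidableEq α]

lemma swap_mem_fixingSubgroup_compl {T : Set α} {a b : α} (ha : a ∈ T) (hb : b ∈ T) :
    Equiv.swap a b ∈ fixingSubgroup (Equiv.Perm α) Tᶜ :=
  (mem_fixingSubgroup_iff _).2 fun _ hy =>
    Equiv.swap_apply_of_ne_of_ne (fun h => hy (h ▸ ha)) (fun h => hy (h ▸ hb))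

lemma prod_map_swap_apply_of_notMem {a x : α} {l : List α} (hax : a ≠ x) (hx : x ∉ l) :
    (l.map (Equiv.swap a)).prod x = x := by
  induction l with
  | nil => rfl
  | cons b l ih =>
    rw [List.mem_cons, not_or] at hx
    rw [List.map_cons, List.prod_cons, Equiv.Perm.mul_apply, ih hx.2]
    exact Equiv.swap_apply_of_ne_of_ne (Ne.symm hax) hx.1

lemma prod_map_swap_append_singleton_apply {a b : α} {l : List α} (hab : a ≠ b) (hb : b ∉ l) :
    ((l ++ [b]).map (Equiv.swap a)).prod a = b := by
  simp only [List.map_append, List.map_cons, List.map_nil, List.prod_append, List.prod_cons,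
    List.prod_nil, mul_one, Equiv.Perm.mul_apply, Equiv.swap_apply_left]
  exact prod_map_swap_apply_of_notMem hab hb

/-- The product of the swaps `(a b₁) ⋯ (a bₘ)` with `b₁ < ⋯ < bₘ` is the cycle
`a ↦ bₘ ↦ bₘ₋₁ ↦ ⋯ ↦ b₁ ↦ a`, so it moves no point above `a` upwards and none below `a`. -/
lemma key_prod_map_swap_apply_mem_Icc {β : Type*} [LinearOrder β] (κ : α → β) {a x : α}
    {l : List α} (hl : l.Pairwise fun u v => κ u < κ v) (hla : ∀ b ∈ l, κ a ≤ κ b)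
    (hx : κ a < κ x) : κ ((l.map (Equiv.swap a)).prod x) ∈ Set.Icc (κ a) (κ x) := by
  induction l with
  | nil => exact ⟨hx.le, le_rfl⟩
  | cons b l ih =>
    rw [List.pairwise_cons] at hl
    have hax : a ≠ x := fun h => (h ▸ hx).false
    rw [List.map_cons, List.prod_cons, Equiv.Perm.mul_apply]
    set y := (l.map (Equiv.swap a)).prod x
    by_cases hya : y = a
    · have hxl : x ∈ l := by
        by_contra hxl
        exact hax (hya.symm.trans (prod_map_swap_apply_of_notMem hax hxl))
      rw [hya, Equiv.swap_apply_left]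
      exact ⟨hla b List.mem_cons_self, (hl.1 x hxl).le⟩
    by_cases hyb : y = b
    · rw [hyb, Equiv.swap_apply_right]
      exact ⟨le_rfl, hx.le⟩
    rw [Equiv.swap_apply_of_ne_of_ne hya hyb]
    exact ih hl.2 fun b' hb' => hla b' (List.mem_cons_of_mem _ hb')

end Swaps

section Lists

variable {α β : Type*}

lemma filter_eq_filter_le_append_filter_lt [LinearOrder β] (κ : α → β) {l : List α}
    (hl : l.Pairwise fun u v => κ u ≤ κ v) (q : α → Bool) (c : β) :
    l.filter q = l.filter (fun b => q b && decide (κ b ≤ c))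
      ++ l.filter (fun b => q b && decide (c < κ b)) := by
  induction l with
  | nil => rfl
  | cons b l ih =>
    rw [List.pairwise_cons] at hl
    rw [List.filter_cons, List.filter_cons, List.filter_cons, ih hl.2]
    rcases le_or_gt (κ b) c with hbc | hbc
    · cases q b <;> simp [hbc, not_lt.2 hbc]
    · have hnil : l.filter (fun b => q b && decide (κ b ≤ c)) = [] :=
        List.filter_eq_nil_iff.2 fun b' hb' => by
          simpa using fun _ => hbc.trans_le (hl.1 b' hb')
      cases q b <;> simp [hbc, not_le.2 hbc, hnil]

lemma flatMap_eq_of_forall_ne {l : List α} (hl : l.Nodup) {t₀ : α} (ht₀ : t₀ ∈ l)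
    {g : α → List β} (hg : ∀ t ∈ l, t ≠ t₀ → g t = []) : l.flatMap g = g t₀ := by
  induction l with
  | nil => simp at ht₀
  | cons b l ih =>
    rw [List.nodup_cons] at hl
    rw [List.flatMap_cons]
    rcases List.mem_cons.1 ht₀ with rfl | ht₀
    · rw [List.flatMap_eq_nil_iff.2 fun t ht => hg t (List.mem_cons_of_mem _ ht)
        (fun h => hl.1 (h ▸ ht)), List.append_nil]
    · rw [hg b List.mem_cons_self (fun h => hl.1 (h ▸ ht₀)), List.nil_append]
      exact ih hl.2 ht₀ fun t ht => hg t (List.mem_cons_of_mem _ ht)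

lemma filter_eq_singleton [DecidableEq α] {l : List α} (hl : l.Nodup) {a : α} (ha : a ∈ l)
    {q : α → Bool} (hq : ∀ b ∈ l, q b = true ↔ b = a) : l.filter q = [a] := by
  rw [List.filter_congr (q := fun b => decide (b = a)) fun b hb => Bool.eq_iff_iff.2 (by
    rw [hq b hb, decide_eq_true_eq]), List.filter_eq, List.count_eq_one_of_mem hl ha,
    List.replicate_one]

end Lists

section GelfandTsetlin

variable {n : ℕ}

lemma ordKey_of_pos {j : ℤ} (h : 0 < j) : ordKey n j = j := if_pos h

lemma invOrdKey_ordKey {j : ℤ} (hj : |j| ≤ n) : invOrdKey n (ordKey n j) = j := by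
  simp only [invOrdKey, ordKey, Int.abs_eq_natAbs] at *
  split_ifs <;> omega

lemma ordKey_injOn {j j' : ℤ} (hj : |j| ≤ n) (hj' : |j'| ≤ n) (h : ordKey n j = ordKey n j') :
    j = j' := by
  rw [← invOrdKey_ordKey hj, h, invOrdKey_ordKey hj']

lemma inP.bounds {i j : ℤ} (h : inP n (i, j)) :
    1 ≤ i ∧ i ≤ n ∧ j ≠ 0 ∧ |j| ≤ n ∧ i ≤ ordKey n j ∧ ordKey n j ≤ 2 * n := by
  simp only [inP, ordKey, Int.abs_eq_natAbs] at *
  split_ifs <;> omega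

lemma jList_eq : jList n = (List.range n).map (fun t : ℕ => (t : ℤ) + 1)
    ++ (List.range n).map (fun t : ℕ => (t : ℤ) - n) := by
  simp only [jList, bind_pure_comp, List.map_eq_map, List.map_map]
  rfl

lemma mem_jList {j : ℤ} : j ∈ jList n ↔ j ≠ 0 ∧ |j| ≤ n := by
  simp only [jList_eq, List.mem_append, List.mem_map, List.mem_range, Int.abs_eq_natAbs]
  constructor
  · rintro (⟨t, ht, rfl⟩ | ⟨t, ht, rfl⟩) <;> omega
  · rintro ⟨h0, hj⟩
    rcases lt_or_gt_of_ne h0 with hj0 | hj0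
    · exact Or.inr ⟨(j + n).toNat, by omega, by omega⟩
    · exact Or.inl ⟨(j - 1).toNat, by omega, by omega⟩

lemma jList_pairwise : (jList n).Pairwise fun u v => ordKey n u < ordKey n v := by
  simp only [jList_eq, List.pairwise_append, List.pairwise_map, List.mem_map, List.mem_range]
  refine ⟨List.pairwise_lt_range.imp_of_mem fun hs ht h => ?_,
    List.pairwise_lt_range.imp_of_mem fun hs ht h => ?_, ?_⟩
  · simp only [List.mem_range, ordKey] at *; split_ifs <;> omega
  · simp only [List.mem_range, ordKey] at *; split_ifs <;> omega
  · rintro _ ⟨s, hs, rfl⟩ _ ⟨t, ht, rfl⟩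
    simp only [ordKey]; split_ifs <;> omega

lemma jList_nodup : (jList n).Nodup :=
  jList_pairwise.imp fun h he => (congrArg (ordKey n) he ▸ h).false

lemma mem_Nfin {j : ℤ} : j ∈ Nfin n ↔ j ≠ 0 ∧ |j| ≤ n := by
  rw [Nfin, List.mem_toFinset, mem_jList]

lemma posList_eq : posList n =
    (List.range n).flatMap fun t : ℕ => (jList n).map fun j => ((t : ℤ) + 1, j) := by
  simp only [posList, bind_pure_comp, List.map_eq_map, List.flatMap_map]

lemma posList_pairwise_fst : (posList n).Pairwise fun p q => p.1 ≤ q.1 := by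
  rw [posList_eq, List.pairwise_flatMap]
  refine ⟨fun _ _ => ?_, List.pairwise_lt_range.imp fun h => ?_⟩
  · rw [List.pairwise_map]
    exact List.pairwise_of_forall fun _ _ => le_rfl
  · simp only [List.mem_map]
    rintro _ ⟨_, _, rfl⟩ _ ⟨_, _, rfl⟩
    simp only
    omega

lemma mem_Pfin {p : ℤ × ℤ} : p ∈ Pfin n ↔ inP n p := by
  obtain ⟨i, j⟩ := p
  simp only [Pfin, Finset.mem_filter, List.mem_toFinset, posList_eq, List.mem_flatMap,
    List.mem_map, List.mem_range, Prod.mk.injEq, and_iff_right_iff_imp]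
  intro h
  obtain ⟨h1, h2, h0, hj, -⟩ := h.bounds
  exact ⟨(i - 1).toNat, by omega, j, mem_jList.2 ⟨h0, hj⟩, by omega, rfl⟩

lemma diag_mem {O : Finset (ℤ × ℤ)} (hA : Aset n ⊆ O) {i : ℤ} (h1 : 1 ≤ i) (h2 : i ≤ n) :
    (i, i) ∈ O :=
  hA <| by
    simp only [Aset, bind_pure_comp, Finset.mem_image, Finset.fmap_def, Finset.mem_range,
      Prod.mk.injEq, and_self]
    exact ⟨i - 1, ⟨(i - 1).toNat, by omega, by omega⟩, by ring⟩

end GelfandTsetlin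

section PipeDreams

variable {n : ℕ} {O : Finset (ℤ × ℤ)}

lemma wPerm_mem_fixingSubgroup {M : Finset (ℤ × ℤ)} {T : Set ℤ}
    (hM : ∀ p ∈ M, p.1 ∈ T ∧ p.2 ∈ T) : wPerm n M ∈ fixingSubgroup (Equiv.Perm ℤ) Tᶜ :=
  Subgroup.list_prod_mem _ <| by
    simp only [List.mem_map, List.mem_filter, decide_eq_true_eq]
    rintro _ ⟨p, ⟨-, hp⟩, rfl⟩
    exact swap_mem_fixingSubgroup_compl (hM p hp).1 (hM p hp).2

lemma wPerm_split (M : Finset (ℤ × ℤ)) (m : ℤ) :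
    wPerm n M = wPerm n (M.filter fun p => p.1 < m) * wPerm n (M.filter fun p => m ≤ p.1) := by
  unfold wPerm
  rw [← List.prod_append, ← List.map_append,
    filter_eq_filter_le_append_filter_lt Prod.fst posList_pairwise_fst _ (m - 1)]
  congr 3 <;> refine List.filter_congr fun p _ => ?_ <;>
    simp only [Finset.mem_filter, Bool.decide_and, Int.le_sub_one_iff, Int.sub_one_lt_iff]

lemma wPerm_eq_prod_swap_of_fst_eq {M : Finset (ℤ × ℤ)} {a : ℤ} (h1 : 1 ≤ a) (h2 : a ≤ n)
    (hM : ∀ p ∈ M, p.1 = a) :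
    wPerm n M = (((jList n).filter fun b => (a, b) ∈ M).map (Equiv.swap a)).prod := by
  have ha : (((a - 1).toNat : ℕ) : ℤ) + 1 = a := by omega
  unfold wPerm
  rw [posList_eq, List.filter_flatMap,
    flatMap_eq_of_forall_ne List.nodup_range (List.mem_range.2 (by omega : (a - 1).toNat < n))]
  · simp only [List.filter_map, List.map_map, ha]
    rfl
  · intro t _ ht
    refine List.filter_eq_nil_iff.2 fun p hp hpM => ht ?_
    obtain ⟨j, -, rfl⟩ := List.mem_map.1 hp
    have := hM _ (of_decide_eq_true hpM)
    omega

lemma prod_swap_filter_ordKey_le_apply {a c x : ℤ} (ha : 0 < a) (hax : a < ordKey n x)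
    (hxc : ordKey n x ≤ c) (q : ℤ → Bool) :
    (((jList n).filter fun b => q b && decide (ordKey n b ≤ c)).map (Equiv.swap a)).prod x
      = (((jList n).filter q).map (Equiv.swap a)).prod x := by
  have hfix : (((jList n).filter fun b => q b && decide (c < ordKey n b)).map
      (Equiv.swap a)).prod x = x := by
    refine prod_map_swap_apply_of_notMem ?_ ?_
    · rintro rfl
      rw [ordKey_of_pos ha] at hax
      exact hax.false
    · simp only [List.mem_filter, Bool.and_eq_true, decide_eq_true_eq, not_and, not_lt]
      exact fun _ _ => hxc
  rw [filter_eq_filter_le_append_filter_lt (ordKey n) (jList_pairwise.imp le_of_lt) q c,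
    List.map_append, List.prod_append, Equiv.Perm.mul_apply, hfix]

lemma wPerm_filter_lt_add_one (Q : ℤ × ℤ → Prop) [DecidablePred Q] {k : ℤ} (hk : 1 ≤ k)
    (hkn : k ≤ n) :
    wPerm n (O.filter fun p => p.1 < k + 1 ∧ Q p) = wPerm n (O.filter fun p => p.1 < k ∧ Q p) *
      (((jList n).filter fun b => (k, b) ∈ O ∧ Q (k, b)).map (Equiv.swap k)).prod := by
  have hrow : ∀ p ∈ O.filter fun p => (p.1 < k + 1 ∧ Q p) ∧ k ≤ p.1, p.1 = k := fun p hp => by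
    simp only [Finset.mem_filter] at hp
    omega
  rw [wPerm_split _ k, Finset.filter_filter, Finset.filter_filter,
    wPerm_eq_prod_swap_of_fst_eq hk hkn hrow]
  congr 1
  · exact congrArg _ (Finset.filter_congr fun p _ =>
      ⟨fun h => ⟨h.2, h.1.2⟩, fun h => ⟨⟨by omega, h.2⟩, h.1⟩⟩)
  · congr 2
    exact List.filter_congr fun b _ => by simp [Finset.mem_filter]

/-- Swaps `(k, b)` with `⋖`-key of `b` above `c` never touch a point whose key lies in `[k, c]`,
because each row product only lowers keys and keeps them above the row index. -/
lemma wPerm_filter_ordKey_le_apply (hO : O ⊆ Pfin n) {c k : ℤ} (hk : 1 ≤ k) (hkn : k ≤ n + 1)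
    {x : ℤ} (hkx : k ≤ ordKey n x) (hxc : ordKey n x ≤ c) :
    wPerm n (O.filter fun p => p.1 < k ∧ ordKey n p.2 ≤ c) x
      = wPerm n (O.filter fun p => p.1 < k) x := by
  induction k, hk using Int.leInduction generalizing x with
  | base =>
    have hempty : ∀ P : ℤ × ℤ → Prop, [DecidablePred P] →
        wPerm n (O.filter fun p => p.1 < 1 ∧ P p) = 1 := fun P _ => by
      rw [Finset.filter_false_of_mem fun p hp => ?_]
      · simp [wPerm]
      · have := (mem_Pfin.1 (hO hp)).bounds.1
        omega
    simpa using congrArg (· x) ((hempty _).trans (hempty fun _ => True).symm)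
  | succ k hk ih =>
    have hkey : ordKey n k = k := ordKey_of_pos (by omega)
    have hrow := wPerm_filter_lt_add_one (n := n) (O := O) (fun _ => True) hk (by omega)
    simp only [and_true] at hrow
    rw [wPerm_filter_lt_add_one (n := n) (O := O) _ hk (by omega), hrow, Equiv.Perm.mul_apply,
      Equiv.Perm.mul_apply]
    have hcut : ((jList n).filter fun b => (k, b) ∈ O ∧ ordKey n (k, b).2 ≤ c)
        = (jList n).filter fun b => decide ((k, b) ∈ O) && decide (ordKey n b ≤ c) :=
      List.filter_congr fun b _ => by simp only [Bool.decide_and]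
    have hbounds := key_prod_map_swap_apply_mem_Icc (ordKey n) (a := k) (x := x)
      (jList_pairwise.filter fun b => decide ((k, b) ∈ O)) (fun b hb => by
        rw [List.mem_filter, decide_eq_true_eq] at hb
        rw [hkey]
        exact (mem_Pfin.1 (hO hb.2)).bounds.2.2.2.2.1) (by omega)
    rw [hkey] at hbounds
    rw [hcut, prod_swap_filter_ordKey_le_apply (a := k) (by omega) (by omega) hxc]
    exact ih (by omega) hbounds.1 (hbounds.2.trans hxc)

end PipeDreams

section RMap

variable {n : ℕ} {O : Finset (ℤ × ℤ)}

lemma mem_princ {p q : ℤ × ℤ} : q ∈ princ n p ↔ inP n q ∧ ple n q p := by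
  rw [princ, Finset.mem_filter, mem_Pfin]

lemma maxPrec_princ {i j : ℤ} (hij : inP n (i, j)) : maxPrec n (princ n (i, j)) = {(i, j)} := by
  have hmem : (i, j) ∈ princ n (i, j) := mem_princ.2 ⟨hij, le_rfl, le_rfl⟩
  ext p
  simp only [maxPrec, Finset.mem_filter, Finset.mem_singleton]
  constructor
  · rintro ⟨hp, hmax⟩
    exact (hmax (i, j) hmem (mem_princ.1 hp).2).symm
  · rintro rfl
    refine ⟨hmem, fun ⟨a, b⟩ hq hle => ?_⟩
    obtain ⟨hqP, hq1, hq2⟩ := mem_princ.1 hq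
    have hb := ordKey_injOn hqP.bounds.2.2.2.1 hij.bounds.2.2.2.1 (le_antisymm hq2 hle.2)
    rw [show a = i from le_antisymm hq1 hle.1, hb]

lemma mem_MO_princ (hO : O ⊆ Pfin n) {i j : ℤ} (hij : inP n (i, j)) {p : ℤ × ℤ} :
    p ∈ MO n O (princ n (i, j)) ↔ (p ∈ O ∧ p.1 ≤ i ∧ ordKey n p.2 ≤ ordKey n j) ∨ p = (i, j) := by
  rw [MO, maxPrec_princ hij, Finset.mem_union, Finset.mem_inter, Finset.mem_singleton, mem_princ]
  exact or_congr_left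
    ⟨fun ⟨⟨_, hle⟩, hp⟩ => ⟨hp, hle⟩, fun ⟨hp, hle⟩ => ⟨⟨mem_Pfin.1 (hO hp), hle⟩, hp⟩⟩

/-- In row `i`, `M_O(⟨i,j⟩)` consists of `(i,j)` and pairs `(i,b)` with `b ⋖ j`; the last swap
`(i j)` sends `i` to `j`, which the earlier swaps fix. -/
lemma wPerm_MO_princ_filter_apply (hO : O ⊆ Pfin n) {i j : ℤ} (hij : inP n (i, j)) :
    wPerm n ((MO n O (princ n (i, j))).filter fun p => i ≤ p.1) i = j := by
  obtain ⟨hi1, hin, hj0, hjn, hik, -⟩ := hij.bounds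
  set M := (MO n O (princ n (i, j))).filter fun p => i ≤ p.1
  have hmem : ∀ b, (i, b) ∈ M ↔ (i, b) ∈ O ∧ ordKey n b ≤ ordKey n j ∨ b = j := fun b => by
    simp only [M, Finset.mem_filter, mem_MO_princ hO hij, le_refl, and_true, true_and,
      Prod.mk.injEq]
  rw [wPerm_eq_prod_swap_of_fst_eq hi1 hin fun p hp => ?_]
  swap
  · simp only [M, Finset.mem_filter, mem_MO_princ hO hij] at hp
    rcases hp with ⟨⟨-, h, -⟩ | rfl, h'⟩ <;> omega
  have hlast : (jList n).filter (fun b => decide ((i, b) ∈ M) &&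
      decide (ordKey n j - 1 < ordKey n b)) = [j] := by
    refine filter_eq_singleton jList_nodup (mem_jList.2 ⟨hj0, hjn⟩) fun b hb => ?_
    obtain ⟨-, hbn⟩ := mem_jList.1 hb
    simp only [Bool.and_eq_true, decide_eq_true_eq, hmem]
    constructor
    · rintro ⟨⟨-, hb⟩ | rfl, hb'⟩
      exacts [ordKey_injOn hbn hjn (by omega), rfl]
    · rintro rfl
      exact ⟨Or.inr rfl, by omega⟩
  rw [filter_eq_filter_le_append_filter_lt (ordKey n) (jList_pairwise.imp le_of_lt) _
    (ordKey n j - 1), hlast]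
  set L := (jList n).filter fun b => decide ((i, b) ∈ M) && decide (ordKey n b ≤ ordKey n j - 1)
  have hL : ∀ b ∈ L, i ≤ ordKey n b ∧ ordKey n b < ordKey n j := fun b hb => by
    simp only [L, List.mem_filter, Bool.and_eq_true, decide_eq_true_eq, hmem] at hb
    obtain ⟨-, ⟨hbO, -⟩ | rfl, hb⟩ := hb
    · exact ⟨(mem_Pfin.1 (hO hbO)).bounds.2.2.2.2.1, by omega⟩
    · omega
  by_cases hji : j = i
  · subst hji
    have : L = [] := List.eq_nil_iff_forall_not_mem.2 fun b hb => by
      have := hL b hb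
      rw [ordKey_of_pos (j := j) (by omega)] at this
      omega
    simp [this]
  · exact prod_map_swap_append_singleton_apply (Ne.symm hji) fun hj => (hL j hj).2.false

def wPermFrom (n : ℕ) (O : Finset (ℤ × ℤ)) (i : ℤ) : Equiv.Perm ℤ :=
  wPerm n (O.filter fun p => i ≤ p.1)

lemma rMap_eq (hO : O ⊆ Pfin n) {i j : ℤ} (hij : inP n (i, j)) :
    rMap n O i j = (wPermFrom n O i)⁻¹ j := by
  obtain ⟨hi1, hin, -, -, hik, -⟩ := hij.bounds
  have hbelow : (MO n O (princ n (i, j))).filter (fun p => p.1 < i)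
      = O.filter fun p => p.1 < i ∧ ordKey n p.2 ≤ ordKey n j := by
    ext p
    simp only [Finset.mem_filter, mem_MO_princ hO hij]
    constructor
    · rintro ⟨⟨hp, -, hpj⟩ | rfl, hpi⟩
      exacts [⟨hp, hpi, hpj⟩, (lt_irrefl _ hpi).elim]
    · rintro ⟨hp, hpi, hpj⟩
      exact ⟨Or.inl ⟨hp, hpi.le, hpj⟩, hpi⟩
  rw [rMap, wOJ, Equiv.Perm.mul_apply, wPerm_split (MO n O (princ n (i, j))) i,
    Equiv.Perm.mul_apply, wPerm_MO_princ_filter_apply hO hij, hbelow,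
    wPerm_filter_ordKey_le_apply hO hi1 (by omega) hik le_rfl, wPerm_split O i, mul_inv_rev,
    Equiv.Perm.mul_apply]
  simp [wPermFrom]

end RMap

section Xi

variable {n : ℕ} {O : Finset (ℤ × ℤ)}

lemma prevO_spec (hA : Aset n ⊆ O) (hO : O ⊆ Pfin n) {i j : ℤ} (hij : inP n (i, j))
    (hji : j ≠ i) : inP n (i, prevO n O i j) ∧ ordKey n (prevO n O i j) < ordKey n j := by
  obtain ⟨hi1, hin, -, hjn, hik, -⟩ := hij.bounds
  have hkey : ordKey n i = i := ordKey_of_pos (by omega)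
  have habs : |i| = i := abs_of_pos (by omega)
  have hlt : i < ordKey n j := lt_of_le_of_ne hik fun h =>
    hji (ordKey_injOn hjn (by rwa [habs]) (h.symm.trans hkey.symm))
  set S := (Nfin n).filter fun j' => (i, j') ∈ O ∧ ordKey n j' < ordKey n j
  have hiS : i ∈ S := by
    simp only [S, Finset.mem_filter, mem_Nfin, habs, hkey]
    exact ⟨⟨by omega, hin⟩, diag_mem hA hi1 hin, hlt⟩
  obtain ⟨t, ht⟩ := Finset.max_of_nonempty (Finset.Nonempty.image ⟨i, hiS⟩ (ordKey n))
  obtain ⟨b, hbS, rfl⟩ := Finset.mem_image.1 (Finset.mem_of_max ht)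
  simp only [S, Finset.mem_filter, mem_Nfin] at hbS
  have hprev : prevO n O i j = b := by
    rw [prevO, ht, WithBot.unbotD_coe, invOrdKey_ordKey hbS.1.2]
  rw [hprev]
  exact ⟨mem_Pfin.1 (hO hbS.2.1), hbS.2.2⟩

lemma wPermFrom_mem_fixingSubgroup (hO : O ⊆ Pfin n) (i : ℤ) :
    wPermFrom n O i ∈ fixingSubgroup (Equiv.Perm ℤ) {y : ℤ | i ≤ |y| ∧ |y| ≤ n}ᶜ :=
  wPerm_mem_fixingSubgroup fun p hp => by
    simp only [Finset.mem_filter] at hp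
    obtain ⟨h1, h2, h3, h4⟩ := mem_Pfin.1 (hO hp.1)
    rw [Set.mem_ofPred_eq, Set.mem_ofPred_eq, abs_of_pos (by omega : 0 < p.1)]
    exact ⟨⟨hp.2, h2⟩, hp.2.trans h3, h4⟩

lemma inP_wPermFrom_apply (hO : O ⊆ Pfin n) {i k : ℤ} (hik : inP n (i, k)) :
    inP n (i, wPermFrom n O i k) :=
  have h := apply_mem_of_mem_fixingSubgroup_compl (wPermFrom_mem_fixingSubgroup hO i)
    (show k ∈ {y : ℤ | i ≤ |y| ∧ |y| ≤ n} from ⟨hik.2.2.1, hik.2.2.2⟩)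
  ⟨hik.1, hik.2.1, h.1, h.2⟩

/-- The rows `i < 1` lie outside `P`, and there `wPermFrom n O i = w_O` is not the identity. -/
def rowShear (n : ℕ) (O : Finset (ℤ × ℤ)) : Equiv.Perm (ℤ × ℤ) :=
  Equiv.prodShear (Equiv.refl ℤ) fun i => if 1 ≤ i then wPermFrom n O i else 1

lemma rowShear_apply_of_inP {i k : ℤ} (hik : inP n (i, k)) :
    rowShear n O (i, k) = (i, wPermFrom n O i k) := by
  simp [rowShear, hik.1]

lemma rowShear_apply_of_not_inP (hO : O ⊆ Pfin n) {q : ℤ × ℤ} (hq : ¬ inP n q) :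
    rowShear n O q = q := by
  obtain ⟨i, k⟩ := q
  by_cases hi : 1 ≤ i
  · have hk : k ∈ {y : ℤ | i ≤ |y| ∧ |y| ≤ n}ᶜ := fun ⟨h1, h2⟩ => hq ⟨hi, by omega, h1, h2⟩
    simpa [rowShear, hi] using (mem_fixingSubgroup_iff _).1 (wPermFrom_mem_fixingSubgroup hO i) k hk
  · simp [rowShear, hi]

/-- `ξ(ε_{i,j})` subtracts `ε_{i,r(i,j')}` for `j' = prevO n O i j`: the children of `(i, j')`
are these `(i, j)`. -/
def xiChildren (n : ℕ) (O : Finset (ℤ × ℤ)) (m : ℤ × ℤ) : Finset (ℤ × ℤ) :=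
  ((Nfin n).filter fun j => inP n (m.1, j) ∧ j ≠ m.1 ∧ prevO n O m.1 j = m.2).map
    (Embedding.sectR m.1 ℤ)

lemma xiChildren_height_lt (hA : Aset n ⊆ O) (hO : O ⊆ Pfin n) (m : ℤ × ℤ) :
    ∀ p ∈ xiChildren n O m,
      (2 * n + 1 - ordKey n p.2).toNat < (2 * n + 1 - ordKey n m.2).toNat := by
  obtain ⟨i, k⟩ := m
  simp only [xiChildren, Finset.mem_map, Finset.mem_filter, Embedding.sectR_apply]
  rintro _ ⟨j, ⟨-, hj, hji, hprev⟩, rfl⟩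
  have := (prevO_spec hA hO hj hji).2
  rw [hprev] at this
  have := hj.bounds.2.2.2.2.2
  dsimp only
  omega

lemma xiChildren_eq_empty (hA : Aset n ⊆ O) (hO : O ⊆ Pfin n) {m : ℤ × ℤ} (hm : ¬ inP n m) :
    xiChildren n O m = ∅ := by
  obtain ⟨i, k⟩ := m
  refine Finset.eq_empty_of_forall_notMem fun p hp => hm ?_
  simp only [xiChildren, Finset.mem_map, Finset.mem_filter] at hp
  obtain ⟨j, ⟨-, hj, hji, hprev⟩, -⟩ := hp
  rw [← hprev]
  exact (prevO_spec hA hO hj hji).1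

/-- `ξ` with coefficients in an arbitrary abelian group, written as `x ↦ (x - N x) ∘ σ`. -/
def xiCoeff {R : Type*} [AddCommGroup R] (n : ℕ) (O : Finset (ℤ × ℤ)) (x : ℤ × ℤ → R) :
    ℤ × ℤ → R :=
  subChildSum (xiChildren n O) x ∘ rowShear n O

lemma xiCoeff_bijective {R : Type*} [AddCommGroup R] (hA : Aset n ⊆ O) (hO : O ⊆ Pfin n) :
    Bijective (xiCoeff (R := R) n O) :=
  (rowShear n O).bijective.comp_right.comp
    (subChildSum_bijective _ (xiChildren_height_lt hA hO))

lemma xiCoeff_map {R R' : Type*} [AddCommGroup R] [AddCommGroup R'] (f : R →+ R')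
    (x : ℤ × ℤ → R) : xiCoeff n O (f ∘ x) = f ∘ xiCoeff n O x := by
  rw [xiCoeff, xiCoeff, subChildSum_map, comp_assoc]

lemma xiCoeff_smul_add (c : ℝ) (x y : ℤ × ℤ → ℝ) :
    xiCoeff n O (c • x + y) = c • xiCoeff n O x + xiCoeff n O y := by
  rw [xiCoeff, xiCoeff, xiCoeff, subChildSum_smul_add]
  rfl

lemma xiMap_eq_xiCoeff (hA : Aset n ⊆ O) (hO : O ⊆ Pfin n) : xiMap n O = xiCoeff n O := by
  funext x ⟨i, k⟩
  by_cases hik : inP n (i, k)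
  · have hB := inP_wPermFrom_apply hO hik
    rw [xiMap, if_pos hik, xiCoeff, comp_apply, rowShear_apply_of_inP hik, subChildSum,
      xiChildren, Finset.sum_map]
    congr 1
    · have hfilter : (Nfin n).filter (fun j => inP n (i, j) ∧ rMap n O i j = k)
          = {wPermFrom n O i k} := by
        ext j
        simp only [Finset.mem_filter, mem_Nfin, Finset.mem_singleton]
        constructor
        · rintro ⟨-, hj, hr⟩
          rw [rMap_eq hO hj, Equiv.Perm.inv_eq_iff_eq] at hr
          exact hr
        · rintro rfl
          obtain ⟨-, -, h0, hn, -⟩ := hB.bounds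
          refine ⟨⟨h0, hn⟩, hB, ?_⟩
          rw [rMap_eq hO hB, Equiv.Perm.inv_eq_iff_eq]
      rw [hfilter, Finset.sum_singleton]
    · refine Finset.sum_congr (Finset.filter_congr fun j _ => ?_) fun _ _ => rfl
      refine and_congr_right fun hj => and_congr_right fun hji => ?_
      rw [rMap_eq hO (prevO_spec hA hO hj hji).1, Equiv.Perm.inv_eq_iff_eq]
  · rw [xiMap, if_neg hik, xiCoeff, comp_apply, rowShear_apply_of_not_inP hO hik, subChildSum,
      xiChildren_eq_empty hA hO hik, Finset.sum_empty, sub_zero]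

end Xi

lemma isLat_iff {x : ℤ × ℤ → ℝ} : IsLat x ↔ ∃ z : ℤ × ℤ → ℤ, Int.castAddHom ℝ ∘ z = x :=
  ⟨fun h => ⟨fun p => (h p).choose, funext fun p => (h p).choose_spec.symm⟩,
    fun ⟨z, hz⟩ p => ⟨z p, hz ▸ rfl⟩⟩

/-- The map `ξ` is unimodular: it is a linear bijection of `ℝ^P` mapping
the lattice `ℤ^P` onto itself (equivalently, its matrix is integer with determinant `±1`
and integer inverse). -/
theorem stmt9 (n : ℕ) (O : Finset (ℤ × ℤ)) (hA : Aset n ⊆ O) (hO : O ⊆ Pfin n) :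
    (∀ (c : ℝ) (x y : (ℤ × ℤ) → ℝ),
      xiMap n O (c • x + y) = c • xiMap n O x + xiMap n O y) ∧
    Function.Bijective (xiMap n O) ∧
    (∀ x, IsLat x → IsLat (xiMap n O x)) ∧
    (∀ y, IsLat y → ∃ x, IsLat x ∧ xiMap n O x = y) := by
  rw [xiMap_eq_xiCoeff hA hO]
  refine ⟨xiCoeff_smul_add, xiCoeff_bijective hA hO, fun x hx => ?_, fun y hy => ?_⟩
  · obtain ⟨z, rfl⟩ := isLat_iff.1 hx
    exact isLat_iff.2 ⟨_, (xiCoeff_map _ z).symm⟩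
  · obtain ⟨w, rfl⟩ := isLat_iff.1 hy
    obtain ⟨z, rfl⟩ := (xiCoeff_bijective hA hO).2 w
    exact ⟨_, isLat_iff.2 ⟨z, rfl⟩, xiCoeff_map _ z⟩
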